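/- For any n ≥ 1 and p ∈ (0,1], the multiple integral ∫_{[0,1]^{2n}} ∏_{i≠j} (1 - p x_i y_j) dx dy is at most ∫_{[0,1]^n} ∏_{j∈[n]} F(p·Σ_{i≠j} x_i) dx, where F(z) = (1-e^{-z})/z (with F(0) = 1). -/

import Mathlib

/-!
Since `1 - ξ ≤ e^{-ξ}`, for fixed `x` the integrand in `y` is at most
`∏ⱼ exp (-(p Σ_{i≠j} xᵢ) yⱼ)`, which factors over the coordinates `yⱼ`; and
`∫₀¹ e^{-z t} dt = F z`.
-/

open MeasureTheory

/-- `F(z) = (1-e^{-z})/z`, with `F(0) = 1`. -/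
noncomputable def F (z : ℝ) : ℝ := if z = 0 then 1 else (1 - Real.exp (-z)) / z

open Real Set Finset

theorem integral_exp_neg_mul_eq_F (z : ℝ) : ∫ t in (0 : ℝ)..1, exp (-(z * t)) = F z := by
  rcases eq_or_ne z 0 with rfl | hz
  · simp [F]
  · simp_rw [← neg_mul,
      intervalIntegral.integral_comp_mul_left (fun t => exp t) (neg_ne_zero.2 hz), integral_exp,
      F, if_neg hz]
    simp only [mul_zero, mul_one, exp_zero, smul_eq_mul]
    field_simp
    ring

theorem setIntegral_Icc_exp_neg_mul_eq_F (z : ℝ) :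
    ∫ t in Icc (0 : ℝ) 1, exp (-(z * t)) = F z := by
  rw [integral_Icc_eq_integral_Ioc, ← intervalIntegral.integral_of_le zero_le_one,
    integral_exp_neg_mul_eq_F]

theorem F_nonneg (z : ℝ) : 0 ≤ F z := by
  rw [← integral_exp_neg_mul_eq_F]
  exact intervalIntegral.integral_nonneg zero_le_one fun t _ => (exp_pos _).le

theorem F_le_one {z : ℝ} (hz : 0 ≤ z) : F z ≤ 1 := by
  rw [← integral_exp_neg_mul_eq_F]
  calc ∫ t in (0 : ℝ)..1, exp (-(z * t)) ≤ ∫ t in (0 : ℝ)..1, (1 : ℝ) := by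
        refine intervalIntegral.integral_mono_on zero_le_one
          ((by fun_prop : Continuous _).intervalIntegrable _ _) (by simp) fun t ht => ?_
        exact exp_le_one_iff.2 (neg_nonpos.2 (mul_nonneg hz ht.1))
    _ = 1 := by simp

@[fun_prop]
theorem measurable_F : Measurable F :=
  Measurable.ite (measurableSet_singleton 0) measurable_const (by fun_prop)

theorem Finset.prod_filter_ne_eq_prod_prod_erase {ι M : Type*} [Fintype ι] [DecidableEq ι]
    [CommMonoid M] (f : ι → ι → M) :
    ∏ q ∈ univ.filter (fun q : ι × ι => q.1 ≠ q.2), f q.1 q.2 =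
      ∏ j, ∏ i ∈ univ.erase j, f i j := by
  rw [prod_filter, ← univ_product_univ, prod_product_right]
  refine prod_congr rfl fun j _ => ?_
  rw [← prod_filter, filter_ne']

theorem one_sub_mul_mul_nonneg {p a b : ℝ} (hp : p ∈ Icc (0 : ℝ) 1) (ha : a ∈ Icc (0 : ℝ) 1)
    (hb : b ∈ Icc (0 : ℝ) 1) : 0 ≤ 1 - p * a * b := by
  linarith [mul_le_one₀ (mul_le_one₀ hp.2 ha.1 ha.2) hb.1 hb.2]

noncomputable abbrev unitCubeMeasure (ι : Type*) [Fintype ι] : Measure (ι → ℝ) :=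
  Measure.pi fun _ => volume.restrict (Icc (0 : ℝ) 1)

section unitCube

variable {ι : Type*} [Fintype ι]

theorem ae_mem_Icc_unitCubeMeasure : ∀ᵐ x ∂unitCubeMeasure ι, ∀ i, x i ∈ Icc (0 : ℝ) 1 :=
  ae_all_iff.2 fun i =>
    (Measure.tendsto_eval_ae_ae (i := i)).eventually (ae_restrict_mem measurableSet_Icc)

theorem integral_prod_exp_neg_mul_eq_prod_F (c : ι → ℝ) :
    ∫ y, ∏ j, exp (-(c j * y j)) ∂unitCubeMeasure ι = ∏ j, F (c j) := by
  rw [integral_fintype_prod_eq_prod (fun j t => exp (-(c j * t)))]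
  exact prod_congr rfl fun j _ => setIntegral_Icc_exp_neg_mul_eq_F (c j)

theorem integrable_prod_exp_neg_mul (c : ι → ℝ) :
    Integrable (fun y => ∏ j, exp (-(c j * y j))) (unitCubeMeasure ι) :=
  Integrable.fintype_prod fun j =>
    (by fun_prop : Continuous fun t => exp (-(c j * t))).integrableOn_Icc

theorem integrable_prod_F_mul_sum_erase [DecidableEq ι] {p : ℝ} (hp : 0 ≤ p) :
    Integrable (fun x => ∏ j, F (p * ∑ i ∈ univ.erase j, x i)) (unitCubeMeasure ι) := by
  refine Integrable.of_bound (by fun_prop : Measurable _).aestronglyMeasurable 1 ?_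
  filter_upwards [ae_mem_Icc_unitCubeMeasure] with x hx
  rw [Real.norm_of_nonneg (prod_nonneg fun j _ => F_nonneg _)]
  exact prod_le_one (fun j _ => F_nonneg _) fun j _ =>
    F_le_one (mul_nonneg hp (sum_nonneg fun i _ => (hx i).1))

variable [DecidableEq ι] {p : ℝ} {x : ι → ℝ}

theorem integral_prod_one_sub_nonneg (hp : p ∈ Icc (0 : ℝ) 1)
    (hx : ∀ i, x i ∈ Icc (0 : ℝ) 1) :
    0 ≤ ∫ y, ∏ q ∈ univ.filter (fun q : ι × ι => q.1 ≠ q.2), (1 - p * x q.1 * y q.2)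
      ∂unitCubeMeasure ι := by
  refine integral_nonneg_of_ae ?_
  filter_upwards [ae_mem_Icc_unitCubeMeasure] with y hy
  exact prod_nonneg fun q _ => one_sub_mul_mul_nonneg hp (hx q.1) (hy q.2)

theorem integral_prod_one_sub_le_prod_F (hp : p ∈ Icc (0 : ℝ) 1)
    (hx : ∀ i, x i ∈ Icc (0 : ℝ) 1) :
    ∫ y, ∏ q ∈ univ.filter (fun q : ι × ι => q.1 ≠ q.2), (1 - p * x q.1 * y q.2)
      ∂unitCubeMeasure ι ≤ ∏ j, F (p * ∑ i ∈ univ.erase j, x i) := by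
  have h_exp (y : ι → ℝ) : ∏ q ∈ univ.filter (fun q : ι × ι => q.1 ≠ q.2),
      exp (-(p * x q.1 * y q.2)) =
        ∏ j, exp (-((p * ∑ i ∈ univ.erase j, x i) * y j)) := by
    rw [prod_filter_ne_eq_prod_prod_erase fun i j => exp (-(p * x i * y j))]
    refine prod_congr rfl fun j _ => ?_
    rw [← exp_sum, sum_neg_distrib, mul_sum, sum_mul]
  calc _ ≤ ∫ y, ∏ j, exp (-((p * ∑ i ∈ univ.erase j, x i) * y j))
          ∂unitCubeMeasure ι := by
        refine integral_mono_of_nonneg ?_ (integrable_prod_exp_neg_mul _) ?_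
        all_goals filter_upwards [ae_mem_Icc_unitCubeMeasure] with y hy
        · exact prod_nonneg fun q _ => one_sub_mul_mul_nonneg hp (hx q.1) (hy q.2)
        · rw [← h_exp]
          exact prod_le_prod (fun q _ => one_sub_mul_mul_nonneg hp (hx q.1) (hy q.2))
            fun q _ => one_sub_le_exp_neg _
    _ = ∏ j, F (p * ∑ i ∈ univ.erase j, x i) := integral_prod_exp_neg_mul_eq_prod_F _

end unitCube

theorem integral_prod_le_general (n : ℕ) (p : ℝ) (hp : p ∈ Set.Ioc (0 : ℝ) 1) :
    let μn : Measure (Fin n → ℝ) := Measure.pi fun _ => volume.restrict (Set.Icc (0 : ℝ) 1)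
    (∫ x, ∫ y, (∏ q ∈ Finset.univ.filter (fun q : Fin n × Fin n => q.1 ≠ q.2),
        (1 - p * x q.1 * y q.2)) ∂μn ∂μn) ≤
      ∫ x, (∏ j, F (p * ∑ i ∈ Finset.univ.erase j, x i)) ∂μn := by
  intro μn
  have hp' : p ∈ Icc (0 : ℝ) 1 := Ioc_subset_Icc_self hp
  refine integral_mono_of_nonneg ?_ (integrable_prod_F_mul_sum_erase hp'.1) ?_
  all_goals filter_upwards [ae_mem_Icc_unitCubeMeasure] with x hx
  · exact integral_prod_one_sub_nonneg hp' hx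
  · exact integral_prod_one_sub_le_prod_F hp' hx

/-- For `n ≥ 1`, `p ∈ (0,1]`:
`∫_{[0,1]^{2n}} ∏_{i≠j} (1 - p x_i y_j) dx dy ≤ ∫_{[0,1]^n} ∏ⱼ F(p Σ_{i≠j} x_i) dx`. -/
theorem integral_prod_le (n : ℕ) (hn : 1 ≤ n) (p : ℝ) (hp : p ∈ Set.Ioc (0 : ℝ) 1) :
    let μn : Measure (Fin n → ℝ) := Measure.pi fun _ => volume.restrict (Set.Icc (0 : ℝ) 1)
    (∫ x, ∫ y, (∏ q ∈ Finset.univ.filter (fun q : Fin n × Fin n => q.1 ≠ q.2),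
        (1 - p * x q.1 * y q.2)) ∂μn ∂μn) ≤
      ∫ x, (∏ j, F (p * ∑ i ∈ Finset.univ.erase j, x i)) ∂μn :=
  integral_prod_le_general n p hp
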